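/- A numeral system d possesses a closed λ-term for Zero Test if and only if the total function φ : ℕ → ℕ defined by φ(0) = 0 and φ(n) = 1 for every n ≥ 1 is λ-definable with respect to d. -/

import Mathlib

/-- Untyped λ-terms in de Bruijn notation. -/
inductive Lam : Type
  | var : ℕ → Lam
  | app : Lam → Lam → Lam
  | lam : Lam → Lam
  deriving DecidableEq

namespace Lam

/-- Shift by one the free variables with index ≥ `d`. -/
def lift (d : ℕ) : Lam → Lam
  | var n => if n < d then var n else var (n + 1)
  | app M N => app (lift d M) (lift d N)
  | lam M => lam (lift (d + 1) M)

/-- Capture-avoiding substitution of `N` for the free variable of index `n`. -/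
def subst : Lam → ℕ → Lam → Lam
  | var m, n, N => if m = n then N else if n < m then var (m - 1) else var m
  | app M₁ M₂, n, N => app (subst M₁ n N) (subst M₂ n N)
  | lam M, n, N => lam (subst M (n + 1) (lift 0 N))

/-- One-step β-reduction (contraction of a β-redex anywhere in the term). -/
inductive Step : Lam → Lam → Prop
  | beta (M N : Lam) : Step (app (lam M) N) (subst M 0 N)
  | appL {M M' : Lam} (N : Lam) : Step M M' → Step (app M N) (app M' N)
  | appR (M : Lam) {N N' : Lam} : Step N N' → Step (app M N) (app M N')
  | lam {M M' : Lam} : Step M M' → Step (Lam.lam M) (Lam.lam M')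

/-- β-equivalence: the equivalence relation generated by one-step β-reduction. -/
def BetaEq : Lam → Lam → Prop := Relation.EqvGen Step

/-- The variable of index `n` occurs free in the term. -/
def HasFree : Lam → ℕ → Prop
  | var m, n => m = n
  | app M N, n => HasFree M n ∨ HasFree N n
  | lam M, n => HasFree M (n + 1)

/-- A term is closed if it has no free variables. -/
def Closed (M : Lam) : Prop := ∀ n, ¬ HasFree M n

/-- A term is β-normal: it contains no β-redex. -/
def IsBetaNormal : Lam → Prop
  | app (lam _) _ => False
  | app M N => IsBetaNormal M ∧ IsBetaNormal N
  | lam M => IsBetaNormal M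
  | var _ => True

/-- A term is βη-normal: it contains no β-redex and no η-redex
`λx.(M x)` with `x` not free in `M`. -/
def IsBetaEtaNormal : Lam → Prop
  | app (lam _) _ => False
  | app M N => IsBetaEtaNormal M ∧ IsBetaEtaNormal N
  | lam (app M (var 0)) => HasFree M 0 ∧ IsBetaEtaNormal (app M (var 0))
  | lam M => IsBetaEtaNormal M
  | var _ => True

/-- `I = λx.x`. -/
def I : Lam := lam (var 0)

/-- `T = λxλy.x`. -/
def T : Lam := lam (lam (var 1))

/-- `F = λxλy.y`. -/
def F : Lam := lam (lam (var 0))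

/-- The pair `<M,N> = λx.(x M N)` (the binder shifts the free variables of `M,N`). -/
def pair (M N : Lam) : Lam := lam (app (app (var 0) (lift 0 M)) (lift 0 N))

end Lam

/-!
Given a zero test `Z`, the term `λx. Z x d₀ d₁` sends `d₀` to `d₀` and every other numeral to
`d₁`. Conversely `d₀ ≠ d₁` are closed βη-normal forms, so by Böhm's theorem there are closed `L⃗`
with `d₀ L⃗ = T` and `d₁ L⃗ = F`, and `λx. F_φ x L⃗` is a zero test.

Böhm's theorem is proved for open normal forms `M, N`, by induction on their size, after every
variable is instantiated by a permutator `π_k = λx₁ … x_k z. z x₁ … x_k`, the arities being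
pairwise distinct and larger than `M` and `N`. Applied to fresh permutators,
`M = λx₁ … x_p. y A₁ … A_a` turns into its head `π_k`, which collects the `Aᵢ` and `k - a`
further arguments and hands them all to the argument in position `p + k - a`. If these positions,
or else the arities `k`, differ for `M` and `N`, suitable constant functions in those positions
return `T` and `F`. Otherwise the heads are the same variable and `N` has the shape of an
η-expansion of `M`; as `N` is η-normal, some arguments of the two differ, a selector in that
position extracts them, and the induction hypothesis separates them.
-/

namespace Lam

open Function

local notation:50 M:51 " ≃β " N:51 => BetaEq M N

def apps (M : Lam) (L : List Lam) : Lam := L.foldl app M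

def lamN : ℕ → Lam → Lam
  | 0, M => M
  | n + 1, M => lam (lamN n M)

def size : Lam → ℕ
  | var _ => 1
  | app M N => size M + size N + 1
  | lam M => size M + 1

@[simp] lemma apps_nil (M : Lam) : apps M [] = M := rfl

@[simp] lemma apps_cons (M X : Lam) (L : List Lam) : apps M (X :: L) = apps (app M X) L := rfl

lemma apps_append (M : Lam) (L R : List Lam) : apps M (L ++ R) = apps (apps M L) R :=
  List.foldl_append

@[simp] lemma lamN_zero (M : Lam) : lamN 0 M = M := rfl

@[simp] lemma lamN_succ (n : ℕ) (M : Lam) : lamN (n + 1) M = lam (lamN n M) := rfl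

lemma lamN_succ' (n : ℕ) (M : Lam) : lamN (n + 1) M = lamN n (lam M) := by
  induction n with
  | zero => rfl
  | succ n ih => rw [lamN_succ, ih, lamN_succ]

lemma size_pos (M : Lam) : 0 < size M := by
  cases M <;> simp [size]

lemma size_lamN (p : ℕ) (M : Lam) : size (lamN p M) = p + size M := by
  induction p with
  | zero => simp
  | succ p ih => simp [size, ih]; omega

lemma size_apps (M : Lam) (L : List Lam) :
    size (apps M L) = size M + (L.map (size · + 1)).sum := by
  induction L generalizing M with
  | nil => simp
  | cons X L ih => simp [ih, size]; omega

/-! ### Free variables, lifting and substitution -/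

@[simp] lemma hasFree_var (m n : ℕ) : HasFree (var m) n ↔ m = n := Iff.rfl

@[simp] lemma hasFree_app (M N : Lam) (n : ℕ) :
    HasFree (app M N) n ↔ HasFree M n ∨ HasFree N n := Iff.rfl

@[simp] lemma hasFree_lam (M : Lam) (n : ℕ) : HasFree (lam M) n ↔ HasFree M (n + 1) := Iff.rfl

lemma hasFree_apps (M : Lam) (L : List Lam) (n : ℕ) :
    HasFree (apps M L) n ↔ HasFree M n ∨ ∃ A ∈ L, HasFree A n := by
  induction L generalizing M with
  | nil => simp
  | cons X L ih => simp [ih, or_assoc]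

lemma hasFree_lamN (p : ℕ) (M : Lam) (n : ℕ) : HasFree (lamN p M) n ↔ HasFree M (n + p) := by
  induction p generalizing n with
  | zero => simp
  | succ p ih => simp [ih, Nat.add_right_comm, Nat.add_assoc]

lemma hasFree_lift (A : Lam) (t n : ℕ) :
    HasFree (lift t A) n ↔ (n < t ∧ HasFree A n) ∨ (t < n ∧ HasFree A (n - 1)) := by
  induction A generalizing t n with
  | var m => simp only [lift]; split <;> simp only [hasFree_var] <;> omega
  | app A B ihA ihB => simp only [lift, hasFree_app, ihA, ihB]; tauto
  | lam A ih =>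
    simp only [lift, hasFree_lam, ih]
    rcases n with _ | n <;> simp

lemma lift_eq_self {A : Lam} {t : ℕ} (h : ∀ n, HasFree A n → n < t) : lift t A = A := by
  induction A generalizing t with
  | var m => simp [lift, h m rfl]
  | app A B ihA ihB =>
    simp only [lift, ihA fun n hn => h n (Or.inl hn), ihB fun n hn => h n (Or.inr hn)]
  | lam A ih =>
    rw [lift, ih]
    rintro (_ | n) hn
    · omega
    · exact Nat.succ_lt_succ (h n hn)

lemma lift_eq_self_of_closed {A : Lam} (h : Closed A) (t : ℕ) : lift t A = A :=
  lift_eq_self fun n hn => absurd hn (h n)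

lemma subst_eq_self {A : Lam} {t : ℕ} (N : Lam) (h : ∀ n, HasFree A n → n < t) :
    subst A t N = A := by
  induction A generalizing t N with
  | var m =>
    have := h m rfl
    simp [subst, show m ≠ t by omega, show ¬ t < m by omega]
  | app A B ihA ihB =>
    simp only [subst, ihA _ fun n hn => h n (Or.inl hn), ihB _ fun n hn => h n (Or.inr hn)]
  | lam A ih =>
    rw [subst, ih]
    rintro (_ | n) hn
    · omega
    · exact Nat.succ_lt_succ (h n hn)

lemma subst_eq_self_of_closed {A : Lam} (h : Closed A) (t : ℕ) (N : Lam) : subst A t N = A :=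
  subst_eq_self N fun n hn => absurd hn (h n)

lemma closed_lamN_iff {p : ℕ} {M : Lam} :
    Closed (lamN p M) ↔ ∀ n, HasFree M n → n < p := by
  simp only [Closed, hasFree_lamN]
  refine ⟨fun h n hn => ?_, fun h n hn => by have := h _ hn; omega⟩
  by_contra hp
  exact h (n - p) (by rwa [Nat.sub_add_cancel (not_lt.1 hp)])

lemma closed_lamN {C : Lam} (hC : Closed C) (n : ℕ) : Closed (lamN n C) :=
  closed_lamN_iff.2 fun m hm => absurd hm (hC m)

lemma closed_I : Closed I := by
  rintro n ⟨⟩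

/-! ### β-equivalence -/

namespace BetaEq

@[refl] lemma refl (M : Lam) : M ≃β M := Relation.EqvGen.refl M

@[symm] lemma symm {M N : Lam} (h : M ≃β N) : N ≃β M := Relation.EqvGen.symm _ _ h

@[trans] lemma trans {M N P : Lam} (h₁ : M ≃β N) (h₂ : N ≃β P) : M ≃β P :=
  Relation.EqvGen.trans _ _ _ h₁ h₂

instance : Trans BetaEq BetaEq BetaEq := ⟨trans⟩

lemma beta (M N : Lam) : app (lam M) N ≃β subst M 0 N := Relation.EqvGen.rel _ _ (.beta M N)

lemma app_left {M M' : Lam} (N : Lam) (h : M ≃β M') : app M N ≃β app M' N := by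
  induction h with
  | rel _ _ h => exact Relation.EqvGen.rel _ _ (Step.appL N h)
  | refl => rfl
  | symm _ _ _ ih => exact ih.symm
  | trans _ _ _ _ _ ih₁ ih₂ => exact ih₁.trans ih₂

lemma apps_left {M M' : Lam} (L : List Lam) (h : M ≃β M') : apps M L ≃β apps M' L := by
  induction L generalizing M M' with
  | nil => exact h
  | cons X L ih => exact ih (h.app_left X)

end BetaEq

/-! ### Instantiation by closed terms -/

def ClosedEnv (σ : ℕ → Lam) : Prop := ∀ i, Closed (σ i)

def envUp (σ : ℕ → Lam) : ℕ → Lam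
  | 0 => var 0
  | i + 1 => lift 0 (σ i)

def inst (σ : ℕ → Lam) : Lam → Lam
  | var i => σ i
  | app A B => app (inst σ A) (inst σ B)
  | lam A => lam (inst (envUp σ) A)

@[simp] lemma inst_var (σ : ℕ → Lam) (i : ℕ) : inst σ (var i) = σ i := rfl

@[simp] lemma inst_app (σ : ℕ → Lam) (A B : Lam) :
    inst σ (app A B) = app (inst σ A) (inst σ B) := rfl

lemma inst_apps (σ : ℕ → Lam) (M : Lam) (L : List Lam) :
    inst σ (apps M L) = apps (inst σ M) (L.map (inst σ)) := by
  induction L generalizing M with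
  | nil => rfl
  | cons X L ih => simp [ih]

/-- `σ` seen from under `t` binders, when `σ` is closed. -/
def extend (t : ℕ) (σ : ℕ → Lam) : ℕ → Lam :=
  fun i => if i < t then var i else σ (i - t)

def push (X : Lam) (σ : ℕ → Lam) : ℕ → Lam
  | 0 => X
  | i + 1 => σ i

section Inst

variable {σ : ℕ → Lam}

lemma ClosedEnv.push {X : Lam} (hX : Closed X) (hσ : ClosedEnv σ) : ClosedEnv (push X σ)
  | 0 => hX
  | i + 1 => hσ i

@[simp] lemma extend_zero (σ : ℕ → Lam) : extend 0 σ = σ := by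
  funext i; simp [extend]

lemma envUp_extend (hσ : ClosedEnv σ) (t : ℕ) : envUp (extend t σ) = extend (t + 1) σ := by
  funext i
  rcases i with _ | i
  · simp [envUp, extend]
  · by_cases h : i < t
    · simp [envUp, extend, h, lift]
    · simp [envUp, extend, h, lift_eq_self_of_closed (hσ _)]

lemma subst_inst_extend (hσ : ClosedEnv σ) {X : Lam} (hX : Closed X) (A : Lam) (t : ℕ) :
    subst (inst (extend (t + 1) σ) A) t X = inst (extend t (push X σ)) A := by
  induction A generalizing t with
  | var i =>
    rcases lt_trichotomy i t with h | rfl | h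
    · simp only [inst_var, extend, if_pos h, if_pos (h.trans (Nat.lt_succ_self t))]
      exact subst_eq_self X fun n hn => by simp only [hasFree_var] at hn; omega
    · simp [extend, subst, push]
    · simp only [inst_var, extend, if_neg (show ¬ i < t + 1 by omega),
        if_neg (show ¬ i < t by omega),
        subst_eq_self_of_closed (hσ _)]
      rw [show i - t = i - (t + 1) + 1 by omega]
      rfl
  | app A B ihA ihB => simp [subst, ihA, ihB]
  | lam A ih =>
    simp only [inst, subst]
    rw [envUp_extend hσ, envUp_extend (hσ.push hX), lift_eq_self_of_closed hX, ih]

lemma betaEq_app_inst_lam (hσ : ClosedEnv σ) {X : Lam} (hX : Closed X) (A : Lam) :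
    app (inst σ (lam A)) X ≃β inst (push X σ) A := by
  have hup : envUp σ = extend 1 σ := by simpa using envUp_extend hσ 0
  have e := subst_inst_extend hσ hX A 0
  rw [extend_zero, zero_add, ← hup] at e
  rw [← e]
  exact BetaEq.beta _ X

lemma inst_extend_eq_self (hσ : ClosedEnv σ) {A : Lam} {t : ℕ}
    (h : ∀ n, HasFree A n → n < t) : inst (extend t σ) A = A := by
  induction A generalizing t with
  | var i => simp [extend, h i rfl]
  | app A B ihA ihB =>
    simp [ihA fun n hn => h n (Or.inl hn), ihB fun n hn => h n (Or.inr hn)]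
  | lam A ih =>
    simp only [inst]
    rw [envUp_extend hσ, ih]
    rintro (_ | n) hn
    · omega
    · exact Nat.succ_lt_succ (h n hn)

lemma inst_eq_self (hσ : ClosedEnv σ) {A : Lam} (hA : Closed A) : inst σ A = A := by
  simpa using inst_extend_eq_self (t := 0) hσ fun n hn => absurd hn (hA n)

lemma lt_of_hasFree_inst_extend (hσ : ClosedEnv σ) (A : Lam) {t n : ℕ}
    (h : HasFree (inst (extend t σ) A) n) : n < t := by
  induction A generalizing t n with
  | var i =>
    simp only [inst_var, extend] at h
    split at h
    · simp only [hasFree_var] at h; omega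
    · exact absurd h (hσ _ n)
  | app A B ihA ihB => exact h.elim (ihA ·) (ihB ·)
  | lam A ih =>
    simp only [inst, hasFree_lam, envUp_extend hσ] at h
    have := ih h
    omega

lemma closed_inst (hσ : ClosedEnv σ) (A : Lam) : Closed (inst σ A) := fun n h =>
  Nat.not_lt_zero n (lt_of_hasFree_inst_extend hσ A (t := 0) (by simpa using h))

lemma inst_extend_lift (hσ : ClosedEnv σ) (A : Lam) (t : ℕ) :
    inst (extend t σ) (lift t A) = inst (extend t (fun i => σ (i + 1))) A := by
  induction A generalizing t with
  | var i =>
    by_cases h : i < t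
    · simp [lift, extend, h]
    · simp [lift, extend, h, show ¬ i + 1 < t by omega, show i + 1 - t = i - t + 1 by omega]
  | app A B ihA ihB => simp [lift, ihA, ihB]
  | lam A ih =>
    simp only [lift, inst]
    rw [envUp_extend hσ, envUp_extend fun i => hσ (i + 1), ih]

end Inst

def shiftN (c : ℕ) : Lam → Lam := (lift 0)^[c]

lemma shiftN_succ (c : ℕ) (A : Lam) : shiftN (c + 1) A = lift 0 (shiftN c A) :=
  Function.iterate_succ_apply' _ _ _

lemma inst_shiftN {σ : ℕ → Lam} (hσ : ClosedEnv σ) (c : ℕ) (A : Lam) :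
    inst σ (shiftN c A) = inst (fun i => σ (i + c)) A := by
  induction c generalizing σ with
  | zero => rfl
  | succ c ih =>
    have h := inst_extend_lift hσ (shiftN c A) 0
    rw [extend_zero, extend_zero] at h
    rw [shiftN_succ, h, ih fun i => hσ _]
    simp only [Nat.add_assoc]

lemma size_lift (A : Lam) (t : ℕ) : size (lift t A) = size A := by
  induction A generalizing t with
  | var m => simp only [lift]; split <;> rfl
  | app A B ihA ihB => simp [lift, size, ihA, ihB]
  | lam A ih => simp [lift, size, ih]

lemma size_shiftN (c : ℕ) (A : Lam) : size (shiftN c A) = size A := by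
  induction c with
  | zero => rfl
  | succ c ih => rw [shiftN_succ, size_lift, ih]

lemma le_of_hasFree_shiftN {c n : ℕ} {A : Lam} (h : HasFree (shiftN c A) n) : c ≤ n := by
  induction c generalizing n with
  | zero => omega
  | succ c ih =>
    rw [shiftN_succ, hasFree_lift] at h
    rcases h with ⟨h, -⟩ | ⟨h, h'⟩
    · omega
    · have := ih h'; omega

/-! ### Applying abstractions to closed arguments -/

def pushList (W : List Lam) (σ : ℕ → Lam) : ℕ → Lam := W.foldl (fun σ X => push X σ) σ

lemma pushList_apply (W : List Lam) (σ : ℕ → Lam) (i : ℕ) :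
    pushList W σ i =
      if h : i < W.length then W.reverse[i]'(by simpa using h) else σ (i - W.length) := by
  induction W generalizing σ with
  | nil => simp [pushList]
  | cons X W ih =>
    simp only [pushList, List.foldl_cons] at ih ⊢
    rw [ih]
    rcases lt_trichotomy i W.length with h | rfl | h
    · simp [h, List.getElem_append_left, show i < W.length + 1 by omega]
    · simp [push]
    · rw [dif_neg (by omega), dif_neg (by simp; omega),
        show i - W.length = i - (W.length + 1) + 1 by omega]
      simp [push]

lemma ClosedEnv.pushList {W : List Lam} {σ : ℕ → Lam} (hW : ∀ X ∈ W, Closed X)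
    (hσ : ClosedEnv σ) : ClosedEnv (pushList W σ) := by
  intro i
  rw [pushList_apply]
  split
  · exact hW _ (List.mem_reverse.1 (List.getElem_mem _))
  · exact hσ _

lemma betaEq_apps_inst_lamN {σ : ℕ → Lam} (hσ : ClosedEnv σ) (W : List Lam)
    (hW : ∀ X ∈ W, Closed X) (body : Lam) (rest : List Lam) :
    apps (inst σ (lamN W.length body)) (W ++ rest) ≃β
      apps (inst (pushList W σ) body) rest := by
  induction W generalizing σ with
  | nil => rfl
  | cons X W ih =>
    have hX := hW X List.mem_cons_self
    exact (BetaEq.apps_left _ (betaEq_app_inst_lam hσ hX _)).trans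
      (ih (hσ.push hX) fun Y hY => hW Y (List.mem_cons_of_mem _ hY))

lemma betaEq_apps_lamN {W : List Lam} (hW : ∀ X ∈ W, Closed X) {body : Lam}
    (h : Closed (lamN W.length body)) :
    apps (lamN W.length body) W ≃β inst (pushList W fun _ => I) body := by
  have hI : ClosedEnv fun _ => I := fun _ => closed_I
  simpa [inst_eq_self hI h] using betaEq_apps_inst_lamN hI W hW body []

/-- `permutator k = λx₁ … x_k z. z x₁ … x_k`. -/
def permutator (k : ℕ) : Lam :=
  lamN (k + 1) (apps (var 0) ((List.range k).map fun i => var (k - i)))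

/-- `selector k j = λx₀ … x_{k-1}. x_j`. -/
def selector (k j : ℕ) : Lam := lamN k (var (k - 1 - j))

lemma closed_permutator (k : ℕ) : Closed (permutator k) := by
  rw [permutator, closed_lamN_iff]
  intro n hn
  simp only [hasFree_apps, hasFree_var, List.mem_map, List.mem_range] at hn
  rcases hn with rfl | ⟨_, ⟨i, hi, rfl⟩, hn⟩
  · omega
  · simp only [hasFree_var] at hn; omega

lemma closed_selector {k j : ℕ} (h : j < k) : Closed (selector k j) := by
  rw [selector, closed_lamN_iff]
  intro n hn
  simp only [hasFree_var] at hn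
  omega

lemma permutator_apps {k : ℕ} {V : List Lam} (hV : V.length = k) (hVc : ∀ X ∈ V, Closed X)
    {Z : Lam} (hZ : Closed Z) : apps (permutator k) (V ++ [Z]) ≃β apps Z V := by
  have hW : ∀ X ∈ V ++ [Z], Closed X := by simpa [or_imp, forall_and] using ⟨hVc, hZ⟩
  have h := betaEq_apps_lamN hW (body := apps (var 0) ((List.range k).map fun i => var (k - i)))
    (by rw [List.length_append, List.length_singleton, hV]; exact closed_permutator k)
  have e : inst (pushList (V ++ [Z]) fun _ => I)
      (apps (var 0) ((List.range k).map fun i => var (k - i))) = apps Z V := by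
    rw [inst_apps, List.map_map]
    congr 1
    · simp [pushList_apply]
    · refine List.ext_getElem (by simp [hV]) fun i h₁ h₂ => ?_
      simp only [List.length_map, List.length_range] at h₁
      simp only [List.getElem_map, List.getElem_range, Function.comp_apply, inst_var,
        pushList_apply, List.length_append, List.length_singleton, hV,
        List.reverse_append, List.reverse_singleton, List.singleton_append,
        show k - i = (k - 1 - i) + 1 by omega, List.getElem_cons_succ, List.getElem_reverse]
      rw [dif_pos (by omega)]
      congr 1
      omega
  rwa [List.length_append, List.length_singleton, hV, e] at h

lemma selector_apps {V : List Lam} (hV : ∀ X ∈ V, Closed X) {j : ℕ} (hj : j < V.length) :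
    apps (selector V.length j) V ≃β V[j] := by
  have h := betaEq_apps_lamN hV (closed_selector hj)
  simpa [selector, pushList_apply, List.getElem_reverse, show V.length - 1 - j < V.length by omega,
    show V.length - 1 - (V.length - 1 - j) = j by omega] using h

lemma lamN_apps {V : List Lam} (hV : ∀ X ∈ V, Closed X) {C : Lam} (hC : Closed C) {n : ℕ}
    (hn : V.length = n) : apps (lamN n C) V ≃β C := by
  have h := betaEq_apps_lamN hV (closed_lamN hC V.length)
  rwa [inst_eq_self (ClosedEnv.pushList hV fun _ => closed_I) hC, hn] at h

lemma closed_T : Closed T := closed_selector (k := 2) (j := 0) (by norm_num)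

lemma closed_F : Closed F := closed_selector (k := 2) (j := 1) (by norm_num)

lemma app_app_T {X Y : Lam} (hX : Closed X) (hY : Closed Y) : app (app T X) Y ≃β X :=
  selector_apps (V := [X, Y]) (by simp [hX, hY]) (j := 0) (by simp)

lemma app_app_F {X Y : Lam} (hX : Closed X) (hY : Closed Y) : app (app F X) Y ≃β Y :=
  selector_apps (V := [X, Y]) (by simp [hX, hY]) (j := 1) (by simp)

lemma app_T_I : app T I ≃β F := BetaEq.beta _ _

/-! ### Separability -/

def Separable (M N : Lam) : Prop :=
  ∃ L : List Lam, (∀ X ∈ L, Closed X) ∧ apps M L ≃β T ∧ apps N L ≃β F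

lemma Separable.symm {M N : Lam} (h : Separable M N) : Separable N M := by
  obtain ⟨L, hL, hM, hN⟩ := h
  refine ⟨L ++ [F, T], by simpa [or_imp, forall_and] using ⟨hL, closed_F, closed_T⟩, ?_, ?_⟩
  · rw [apps_append]; exact (hN.apps_left _).trans (app_app_F closed_F closed_T)
  · rw [apps_append]; exact (hM.apps_left _).trans (app_app_T closed_F closed_T)

def falseTail : ℕ → List Lam
  | 0 => [I]
  | c + 1 => lamN c F :: List.replicate (c + 1) I

@[simp] lemma length_falseTail (c : ℕ) : (falseTail c).length = c + 1 := by
  cases c <;> simp [falseTail]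

lemma closed_falseTail {c : ℕ} : ∀ X ∈ falseTail c, Closed X := by
  cases c <;> simp [falseTail, closed_I, closed_lamN closed_F, List.mem_replicate]

lemma apps_T_falseTail (c : ℕ) : apps T (falseTail c) ≃β F := by
  cases c with
  | zero => exact app_T_I
  | succ c =>
    calc apps T (falseTail (c + 1))
        = apps (app (app T (lamN c F)) I) (List.replicate c I) := rfl
      _ ≃β apps (lamN c F) (List.replicate c I) :=
          (app_app_T (closed_lamN closed_F c) closed_I).apps_left _
      _ ≃β F := lamN_apps (by simp [List.mem_replicate, closed_I]) closed_F (by simp)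

/-! ### βη-normal forms -/

lemma isBetaEtaNormal_app_iff {M N : Lam} :
    IsBetaEtaNormal (app M N) ↔
      (∀ A, M ≠ lam A) ∧ IsBetaEtaNormal M ∧ IsBetaEtaNormal N := by
  cases M <;> simp [IsBetaEtaNormal]

lemma isBetaEtaNormal_lam_iff {M : Lam} :
    IsBetaEtaNormal (lam M) ↔ IsBetaEtaNormal M ∧ ∀ A, M = app A (var 0) → HasFree A 0 := by
  rcases M with _ | ⟨A, ⟨_ | _⟩ | _ | _⟩ | _ <;> simp [IsBetaEtaNormal, and_comm]

lemma IsBetaEtaNormal.of_lamN {n : ℕ} {M : Lam} (h : IsBetaEtaNormal (lamN n M)) :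
    IsBetaEtaNormal M := by
  induction n generalizing M with
  | zero => exact h
  | succ n ih => exact (isBetaEtaNormal_lam_iff.1 (ih (by rwa [← lamN_succ']))).1

lemma IsBetaEtaNormal.lift {A : Lam} (h : IsBetaEtaNormal A) (t : ℕ) :
    IsBetaEtaNormal (lift t A) := by
  induction A generalizing t with
  | var n => simp only [Lam.lift]; split <;> simp [IsBetaEtaNormal]
  | app M N ihM ihN =>
    obtain ⟨hlam, hM, hN⟩ := isBetaEtaNormal_app_iff.1 h
    refine isBetaEtaNormal_app_iff.2 ⟨fun A hA => ?_, ihM hM t, ihN hN t⟩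
    cases M with
    | var n => simp only [Lam.lift] at hA; split at hA <;> cases hA
    | app => cases hA
    | lam M => exact hlam M rfl
  | lam M ih =>
    obtain ⟨hM, heta⟩ := isBetaEtaNormal_lam_iff.1 h
    refine isBetaEtaNormal_lam_iff.2 ⟨ih hM (t + 1), fun A hA => ?_⟩
    rcases M with _ | ⟨M, N⟩ | _ <;> simp only [Lam.lift, app.injEq, reduceCtorEq] at hA
    · split at hA <;> cases hA
    obtain ⟨rfl, hN⟩ := hA
    obtain rfl : N = var 0 := by
      cases N <;> simp only [Lam.lift, reduceCtorEq] at hN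
      split at hN <;> simp only [var.injEq] at hN ⊢ <;> omega
    exact (hasFree_lift _ _ _).2 (Or.inl ⟨Nat.succ_pos t, heta M rfl⟩)

lemma IsBetaEtaNormal.shiftN {A : Lam} (h : IsBetaEtaNormal A) (c : ℕ) :
    IsBetaEtaNormal (shiftN c A) := by
  induction c with
  | zero => exact h
  | succ c ih => rw [shiftN_succ]; exact ih.lift 0

@[ext] structure Hnf where
  binders : ℕ
  head : ℕ
  args : List Lam

namespace Hnf

def toLam (H : Hnf) : Lam := lamN H.binders (apps (var H.head) H.args)

lemma binders_add_length_lt_size (H : Hnf) : H.binders + H.args.length < size H.toLam := by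
  simp only [toLam, size_lamN, size_apps, size, List.sum_map_add, List.map_const',
    List.sum_replicate, smul_eq_mul, mul_one]
  omega

lemma size_lt_of_mem {H : Hnf} {A : Lam} (hA : A ∈ H.args) : size A < size H.toLam := by
  have := List.le_sum_of_mem (List.mem_map_of_mem (f := (size · + 1)) hA)
  simp only [toLam, size_lamN, size_apps, size]
  omega

def etaArgs (c : ℕ) (As : List Lam) : List Lam :=
  As.map (shiftN c) ++ (List.range c).reverse.map var

def etaExpand (H : Hnf) (c : ℕ) : Hnf := ⟨H.binders + c, H.head + c, etaArgs c H.args⟩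

@[simp] lemma etaExpand_zero (H : Hnf) : H.etaExpand 0 = H := by
  simp [etaExpand, etaArgs, shiftN]

lemma not_isBetaEtaNormal_etaExpand_succ (H : Hnf) (c : ℕ) :
    ¬ IsBetaEtaNormal (H.etaExpand (c + 1)).toLam := by
  intro hn
  have e : (H.etaExpand (c + 1)).toLam = lamN (H.binders + c) (lam (app
      (apps (var (H.head + c + 1))
        (H.args.map (shiftN (c + 1)) ++ (List.range c).reverse.map (var ∘ Nat.succ)))
      (var 0))) := by
    rw [← lamN_succ']
    simp [etaExpand, toLam, etaArgs, List.range_succ_eq_map, apps_append, add_assoc]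
  rw [e] at hn
  have h0 := (isBetaEtaNormal_lam_iff.1 hn.of_lamN).2 _ rfl
  rw [hasFree_apps] at h0
  rcases h0 with h0 | ⟨X, hX, h0⟩
  · simp only [hasFree_var] at h0; omega
  rcases List.mem_append.1 hX with hX | hX
  · obtain ⟨A, -, rfl⟩ := List.mem_map.1 hX
    exact absurd (le_of_hasFree_shiftN h0) (by omega)
  · obtain ⟨i, -, rfl⟩ := List.mem_map.1 hX
    simp at h0

lemma etaExpand_eq_self_of_isBetaEtaNormal {H : Hnf} {c : ℕ}
    (h : IsBetaEtaNormal (H.etaExpand c).toLam) : H.etaExpand c = H := by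
  rcases c with _ | c
  · exact etaExpand_zero H
  · exact absurd h (not_isBetaEtaNormal_etaExpand_succ H c)

lemma size_le_of_mem_etaExpand {H : Hnf} {c : ℕ} {X : Lam} (hX : X ∈ (H.etaExpand c).args) :
    size X ≤ size H.toLam := by
  simp only [etaExpand, etaArgs, List.mem_append, List.mem_map] at hX
  rcases hX with ⟨A, hA, rfl⟩ | ⟨i, -, rfl⟩
  · rw [size_shiftN]; exact (size_lt_of_mem hA).le
  · exact size_pos _

lemma isBetaEtaNormal_of_mem_etaExpand {H : Hnf} (hH : ∀ A ∈ H.args, IsBetaEtaNormal A)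
    {c : ℕ} {X : Lam} (hX : X ∈ (H.etaExpand c).args) : IsBetaEtaNormal X := by
  simp only [etaExpand, etaArgs, List.mem_append, List.mem_map] at hX
  rcases hX with ⟨A, hA, rfl⟩ | ⟨i, -, rfl⟩
  · exact (hH A hA).shiftN c
  · trivial

end Hnf

lemma IsBetaEtaNormal.exists_hnf {M : Lam} (hM : IsBetaEtaNormal M) :
    ∃ H : Hnf, H.toLam = M ∧ ∀ A ∈ H.args, IsBetaEtaNormal A := by
  induction M with
  | var n => exact ⟨⟨0, n, []⟩, rfl, by simp⟩
  | lam M ih =>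
    obtain ⟨⟨p, h, As⟩, rfl, hAs⟩ := ih (isBetaEtaNormal_lam_iff.1 hM).1
    exact ⟨⟨p + 1, h, As⟩, rfl, hAs⟩
  | app M N ihM ihN =>
    obtain ⟨hlam, hM, hN⟩ := isBetaEtaNormal_app_iff.1 hM
    obtain ⟨⟨_ | p, h, As⟩, rfl, hAs⟩ := ihM hM
    · refine ⟨⟨0, h, As ++ [N]⟩, by simp [Hnf.toLam, apps_append], ?_⟩
      simpa [or_imp, forall_and] using ⟨hAs, hN⟩
    · exact absurd rfl (hlam _)

/-! ### Böhm-out with permutators -/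

/-- The de Bruijn index `i` under `p` binders points either to the binder `.inr j`, the `j`-th
one counted from the outside, or to the free variable `.inl (i - p)`. -/
def slot (p i : ℕ) : ℕ ⊕ ℕ := if i < p then .inr (p - 1 - i) else .inl (i - p)

@[simp] lemma slot_zero (i : ℕ) : slot 0 i = .inl i := by simp [slot]

lemma slot_add_add (p c i : ℕ) : slot (p + c) (i + c) = slot p i := by
  unfold slot
  split_ifs <;> first | omega | (congr 1; omega)

lemma eq_add_of_slot_eq {p c h g : ℕ} (hs : slot p h = slot (p + c) g) : g = h + c := by
  unfold slot at hs
  split_ifs at hs <;> simp only [Sum.inr.injEq, Sum.inl.injEq] at hs <;> omega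

lemma slot_injective (p : ℕ) : Injective (slot p) := fun i j h => by
  have := eq_add_of_slot_eq (c := 0) h
  omega

/-- A slot of a subterm lying under `q` binders, read as a slot of the whole term; the fresh
indices of the subterm start after the `q` ones taken by those binders. -/
def underSlots (q : ℕ) : ℕ ⊕ ℕ → ℕ ⊕ ℕ := Sum.elim (slot q) fun j => .inr (q + j)

lemma underSlots_injective (q : ℕ) : Injective (underSlots q) := by
  refine (slot_injective q).sumElim (fun i j h => by simpa using h) fun i j => ?_
  unfold slot
  split_ifs <;> simp
  omega

section Bohm

variable (ar : ℕ ⊕ ℕ → ℕ)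

def permEnv (p : ℕ) : ℕ → Lam := fun i => permutator (ar (slot p i))

lemma permEnv_comp_underSlots (q : ℕ) : permEnv (ar ∘ underSlots q) 0 = permEnv ar q := by
  funext i
  simp [permEnv, underSlots]

def PermSeparable (B : ℕ) (M N : Lam) : Prop :=
  ∀ ar : ℕ ⊕ ℕ → ℕ, Injective ar → (∀ x, B < ar x) →
    Separable (inst (permEnv ar 0) M) (inst (permEnv ar 0) N)

def freshArgs (s n : ℕ) : List Lam := (List.range' s n).map fun j => permutator (ar (.inr j))

lemma closedEnv_permEnv (p : ℕ) : ClosedEnv (permEnv ar p) := fun _ => closed_permutator _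

lemma closed_freshArgs (s n : ℕ) : ∀ X ∈ freshArgs ar s n, Closed X := by
  simp only [freshArgs, List.mem_map]
  rintro _ ⟨j, -, rfl⟩
  exact closed_permutator _

@[simp] lemma length_freshArgs (s n : ℕ) : (freshArgs ar s n).length = n := by simp [freshArgs]

lemma freshArgs_add (s m n : ℕ) :
    freshArgs ar s (m + n) = freshArgs ar s m ++ freshArgs ar (s + m) n := by
  simp [freshArgs, ← List.range'_append_1]

lemma freshArgs_zero_eq {p t : ℕ} (h : p ≤ t) :
    freshArgs ar 0 t = freshArgs ar 0 p ++ freshArgs ar p (t - p) := by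
  have e := freshArgs_add ar 0 p (t - p)
  rwa [zero_add, Nat.add_sub_cancel' h] at e

lemma pushList_freshArgs (p : ℕ) : pushList (freshArgs ar 0 p) (permEnv ar 0) = permEnv ar p := by
  funext i
  rw [pushList_apply]
  split_ifs with h <;> simp only [length_freshArgs] at h
  · simp [freshArgs, permEnv, slot, List.getElem_reverse, h]
  · simp [permEnv, slot, h]

def Hnf.arity (H : Hnf) : ℕ := ar (slot H.binders H.head)

/-- Having consumed `H.binders` fresh arguments, `H.toLam` has the head
`permutator (H.arity ar)` applied to `H.args`; the argument at position `H.pivot ar` is the one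
this permutator hands all the others to. -/
def Hnf.pivot (H : Hnf) : ℕ := H.binders + (H.arity ar - H.args.length)

variable {ar} in
lemma Hnf.apps_inst_toLam (H : Hnf) {W : List Lam} (hW : ∀ X ∈ W, Closed X)
    (hlen : H.args.length + W.length = H.arity ar) {Z : Lam} (hZ : Closed Z) {R : List Lam} :
    apps (inst (permEnv ar 0) H.toLam) (freshArgs ar 0 H.binders ++ W ++ Z :: R) ≃β
      apps Z (H.args.map (inst (permEnv ar H.binders)) ++ W ++ R) := by
  have h := betaEq_apps_inst_lamN (closedEnv_permEnv ar 0) _ (closed_freshArgs ar 0 H.binders)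
    (apps (var H.head) H.args) (W ++ Z :: R)
  rw [length_freshArgs, pushList_freshArgs, inst_apps, inst_var] at h
  have hargs : ∀ X ∈ H.args.map (inst (permEnv ar H.binders)) ++ W, Closed X := by
    simp only [List.mem_append, List.mem_map]
    rintro _ (⟨A, -, rfl⟩ | hX)
    exacts [closed_inst (closedEnv_permEnv ar _) A, hW _ hX]
  rw [List.append_assoc]
  calc _ ≃β _ := h
    _ = apps (apps (permutator (H.arity ar))
          (H.args.map (inst (permEnv ar H.binders)) ++ W ++ [Z])) R := by
        simp [apps_append, permEnv, Hnf.arity]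
    _ ≃β _ := (permutator_apps (by simpa using hlen) hargs hZ).apps_left R
    _ = _ := by rw [← apps_append]

def Hnf.passedArgs (H : Hnf) : List Lam :=
  H.args.map (inst (permEnv ar H.binders)) ++ freshArgs ar H.binders (H.arity ar - H.args.length)

variable {ar}

lemma Hnf.length_passedArgs {H : Hnf} (hfit : H.args.length ≤ H.arity ar) :
    (H.passedArgs ar).length = H.arity ar := by
  simp [Hnf.passedArgs]; omega

lemma Hnf.closed_passedArgs (H : Hnf) : ∀ X ∈ H.passedArgs ar, Closed X := by
  simp only [Hnf.passedArgs, List.forall_mem_append, List.forall_mem_map]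
  exact ⟨fun A _ => closed_inst (closedEnv_permEnv ar _) A, closed_freshArgs ar _ _⟩

lemma Hnf.apps_inst_toLam_pivot (H : Hnf) (hfit : H.args.length ≤ H.arity ar) {Z : Lam}
    (hZ : Closed Z) (R : List Lam) :
    apps (inst (permEnv ar 0) H.toLam) (freshArgs ar 0 (H.pivot ar) ++ Z :: R) ≃β
      apps Z (H.passedArgs ar ++ R) := by
  rw [Hnf.pivot, freshArgs_zero_eq ar (Nat.le_add_right _ _), Nat.add_sub_cancel_left]
  exact H.apps_inst_toLam (closed_freshArgs ar _ _) (by simp; omega) hZ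

lemma Hnf.apps_inst_toLam_lamN (H : Hnf) {W : List Lam} (hW : ∀ X ∈ W, Closed X)
    (hlen : H.args.length + W.length = H.arity ar) {C : Lam} (hC : Closed C) {R : List Lam}
    (hR : ∀ X ∈ R, Closed X) {n : ℕ} (hn : n = H.arity ar + R.length) :
    apps (inst (permEnv ar 0) H.toLam) (freshArgs ar 0 H.binders ++ W ++ lamN n C :: R) ≃β
      C := by
  refine (H.apps_inst_toLam hW hlen (closed_lamN hC n)).trans (lamN_apps ?_ hC (by simp; omega))
  simp only [List.forall_mem_append, List.forall_mem_map]
  exact ⟨⟨fun A _ => closed_inst (closedEnv_permEnv ar _) A, hW⟩, hR⟩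

lemma Hnf.arity_etaExpand (H : Hnf) (c : ℕ) : (H.etaExpand c).arity ar = H.arity ar := by
  simp [Hnf.arity, Hnf.etaExpand, slot_add_add]

lemma Hnf.map_inst_etaArgs (As : List Lam) (p c : ℕ) :
    (Hnf.etaArgs c As).map (inst (permEnv ar (p + c))) =
      As.map (inst (permEnv ar p)) ++ freshArgs ar p c := by
  simp only [Hnf.etaArgs, List.map_append, List.map_map]
  congr 1
  · refine List.map_congr_left fun A _ => ?_
    simp only [Function.comp_apply, inst_shiftN (closedEnv_permEnv ar _), permEnv, slot_add_add]
    rfl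
  · refine List.ext_getElem (by simp) fun i h₁ h₂ => ?_
    simp only [List.length_map, List.length_reverse, List.length_range] at h₁
    simp [freshArgs, permEnv, slot, List.getElem_reverse, show c - 1 - i < p + c by omega,
      show p + c - 1 - (c - 1 - i) = p + i by omega]

lemma Hnf.passedArgs_etaExpand (H : Hnf) {c : ℕ} (hc : H.args.length + c ≤ H.arity ar) :
    (H.etaExpand c).passedArgs ar = H.passedArgs ar := by
  have hlen : (H.etaExpand c).args.length = H.args.length + c := by
    simp [Hnf.etaExpand, Hnf.etaArgs]
  rw [Hnf.passedArgs, Hnf.passedArgs, hlen, Hnf.arity_etaExpand]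
  simp only [Hnf.etaExpand]
  rw [Hnf.map_inst_etaArgs, List.append_assoc, ← freshArgs_add]
  congr 2
  omega

lemma Hnf.getElem_passedArgs (H : Hnf) {j : ℕ} (hj : j < H.args.length) :
    (H.passedArgs ar)[j]'(by simp [Hnf.passedArgs]; omega) =
      inst (permEnv ar H.binders) H.args[j] := by
  simp [Hnf.passedArgs, List.getElem_append_left, hj]

lemma Hnf.apps_inst_toLam_selector (H : Hnf) {c : ℕ} (hc : H.args.length + c ≤ H.arity ar)
    {j : ℕ} (hj : j < H.args.length + c) {L : List Lam} :
    apps (inst (permEnv ar 0) H.toLam)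
        (freshArgs ar 0 (H.pivot ar) ++ selector (H.arity ar) j :: L) ≃β
      apps (inst (permEnv ar (H.binders + c))
        ((H.etaExpand c).args[j]'(by simpa [Hnf.etaExpand, Hnf.etaArgs] using hj))) L := by
  have hlen := H.length_passedArgs (ar := ar) (by omega)
  calc _ ≃β apps (selector (H.arity ar) j) (H.passedArgs ar ++ L) :=
        H.apps_inst_toLam_pivot (by omega) (closed_selector (by omega)) L
    _ = apps (apps (selector (H.passedArgs ar).length j) (H.passedArgs ar)) L := by
        rw [apps_append, hlen]
    _ ≃β apps ((H.passedArgs ar)[j]'(by omega)) L :=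
        (selector_apps H.closed_passedArgs (by omega)).apps_left L
    _ = _ := by
        simp only [← H.passedArgs_etaExpand hc]
        exact congrArg (apps · L) ((H.etaExpand c).getElem_passedArgs _)

section Cases

variable {B : ℕ} {H₁ H₂ : Hnf}

lemma Hnf.length_args_lt_arity (harB : ∀ x, B < ar x) {H : Hnf} (hB : size H.toLam ≤ B) :
    H.args.length < H.arity ar := by
  have := H.binders_add_length_lt_size
  have := harB (slot H.binders H.head)
  rw [Hnf.arity]
  omega

lemma Hnf.binders_le_pivot (harB : ∀ x, B < ar x) {H H' : Hnf}
    (hB : size H.toLam + size H'.toLam ≤ B) : H'.binders ≤ H.pivot ar := by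
  have := H.binders_add_length_lt_size
  have := H'.binders_add_length_lt_size
  have := harB (slot H.binders H.head)
  rw [Hnf.pivot, Hnf.arity]
  omega

lemma separable_of_pivot_lt (harB : ∀ x, B < ar x) (hB : size H₁.toLam + size H₂.toLam ≤ B)
    (ht : H₁.pivot ar < H₂.pivot ar) :
    Separable (inst (permEnv ar 0) H₁.toLam) (inst (permEnv ar 0) H₂.toLam) := by
  have hfit₁ := H₁.length_args_lt_arity harB (by omega)
  have hfit₂ := H₂.length_args_lt_arity harB (by omega)
  have hq := H₁.binders_le_pivot harB (H' := H₂) hB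
  obtain ⟨m, hm⟩ : ∃ m, H₂.pivot ar = H₁.pivot ar + (m + 1) :=
    ⟨H₂.pivot ar - H₁.pivot ar - 1, by omega⟩
  have hZ₁ := closed_lamN closed_T (H₁.arity ar + (m + 1))
  have hZ₂ := closed_lamN closed_F (H₂.arity ar)
  have hI : ∀ X ∈ List.replicate m I, Closed X :=
    fun X hX => List.eq_of_mem_replicate hX ▸ closed_I
  refine ⟨freshArgs ar 0 (H₁.pivot ar) ++ lamN (H₁.arity ar + (m + 1)) T ::
    (List.replicate m I ++ [lamN (H₂.arity ar) F]), ?_, ?_, ?_⟩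
  · simp only [List.forall_mem_append, List.forall_mem_cons]
    exact ⟨closed_freshArgs ar 0 _, hZ₁, hI, hZ₂, by simp⟩
  · refine (H₁.apps_inst_toLam_pivot hfit₁.le hZ₁ _).trans (lamN_apps ?_ closed_T ?_)
    · simp only [List.forall_mem_append, List.forall_mem_cons]
      exact ⟨H₁.closed_passedArgs, hI, hZ₂, by simp⟩
    · simp [H₁.length_passedArgs hfit₁.le]
  · have e : freshArgs ar 0 (H₁.pivot ar) ++ lamN (H₁.arity ar + (m + 1)) T ::
          (List.replicate m I ++ [lamN (H₂.arity ar) F]) =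
        freshArgs ar 0 H₂.binders ++ (freshArgs ar H₂.binders (H₁.pivot ar - H₂.binders) ++
          lamN (H₁.arity ar + (m + 1)) T :: List.replicate m I) ++ [lamN (H₂.arity ar) F] := by
      rw [freshArgs_zero_eq ar hq]
      simp
    rw [e]
    refine H₂.apps_inst_toLam_lamN ?_ ?_ closed_F (by simp) (by simp)
    · simp only [List.forall_mem_append, List.forall_mem_cons]
      exact ⟨closed_freshArgs ar _ _, hZ₁, hI⟩
    · simp only [Hnf.pivot] at hm hq ⊢
      simp
      omega

lemma separable_of_arity_lt (harB : ∀ x, B < ar x) (hB : size H₁.toLam + size H₂.toLam ≤ B)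
    (ht : H₁.pivot ar = H₂.pivot ar) (hk : H₁.arity ar < H₂.arity ar) :
    Separable (inst (permEnv ar 0) H₁.toLam) (inst (permEnv ar 0) H₂.toLam) := by
  have hfit₁ := H₁.length_args_lt_arity harB (by omega)
  have hfit₂ := H₂.length_args_lt_arity harB (by omega)
  have hZ := closed_lamN closed_T (H₂.arity ar)
  refine ⟨freshArgs ar 0 (H₁.pivot ar) ++
    lamN (H₂.arity ar) T :: falseTail (H₂.arity ar - H₁.arity ar - 1), ?_, ?_, ?_⟩
  · simp only [List.forall_mem_append, List.forall_mem_cons]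
    exact ⟨closed_freshArgs ar 0 _, hZ, closed_falseTail⟩
  · refine (H₁.apps_inst_toLam_pivot hfit₁.le hZ _).trans (lamN_apps ?_ closed_T ?_)
    · exact List.forall_mem_append.2 ⟨H₁.closed_passedArgs, closed_falseTail⟩
    · simp [H₁.length_passedArgs hfit₁.le]; omega
  · rw [ht]
    calc _ ≃β apps (lamN (H₂.arity ar) T) (H₂.passedArgs ar ++ falseTail _) :=
          H₂.apps_inst_toLam_pivot hfit₂.le hZ _
      _ = apps (apps (lamN (H₂.arity ar) T) (H₂.passedArgs ar)) (falseTail _) := apps_append ..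
      _ ≃β apps T (falseTail _) :=
          (lamN_apps H₂.closed_passedArgs closed_T (H₂.length_passedArgs hfit₂.le)).apps_left _
      _ ≃β F := apps_T_falseTail _

lemma separable_of_arity_eq (har : Injective ar) (harB : ∀ x, B < ar x)
    (hB : size H₁.toLam + size H₂.toLam ≤ B) (hA₁ : ∀ A ∈ H₁.args, IsBetaEtaNormal A)
    (hN₂ : IsBetaEtaNormal H₂.toLam) (hA₂ : ∀ A ∈ H₂.args, IsBetaEtaNormal A)
    (hne : H₁.toLam ≠ H₂.toLam) (hpq : H₁.binders ≤ H₂.binders)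
    (ht : H₁.pivot ar = H₂.pivot ar) (hk : H₁.arity ar = H₂.arity ar)
    (ih : ∀ M N, size M + size N < size H₁.toLam + size H₂.toLam → IsBetaEtaNormal M →
      IsBetaEtaNormal N → M ≠ N → PermSeparable B M N) :
    Separable (inst (permEnv ar 0) H₁.toLam) (inst (permEnv ar 0) H₂.toLam) := by
  have hfit₁ := H₁.length_args_lt_arity harB (by omega)
  have hfit₂ := H₂.length_args_lt_arity harB (by omega)
  obtain ⟨c, hc⟩ : ∃ c, H₂.binders = H₁.binders + c :=
    ⟨_, (Nat.add_sub_cancel' hpq).symm⟩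
  have hhead : H₂.head = H₁.head + c := eq_add_of_slot_eq (hc ▸ har hk)
  have hlen : H₂.args.length = H₁.args.length + c := by
    simp only [Hnf.pivot] at ht
    omega
  have hE : (H₁.etaExpand c).args.length = H₂.args.length := by
    simp [Hnf.etaExpand, Hnf.etaArgs, hlen]
  obtain ⟨j, hj, hj'⟩ : ∃ j, ∃ hj : j < H₂.args.length,
      (H₁.etaExpand c).args[j] ≠ H₂.args[j] := by
    by_contra! h
    have hH₂ : H₂ = H₁.etaExpand c :=
      Hnf.ext hc hhead (List.ext_getElem hE.symm fun j h₁ _ => (h j h₁).symm)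
    exact hne (by rw [hH₂, Hnf.etaExpand_eq_self_of_isBetaEtaNormal (hH₂ ▸ hN₂)])
  have hmem₁ := List.getElem_mem (l := (H₁.etaExpand c).args) (hE ▸ hj)
  have hmem₂ := List.getElem_mem hj
  obtain ⟨L, hL, hT, hF⟩ := ih _ _
    (by have := Hnf.size_le_of_mem_etaExpand hmem₁; have := Hnf.size_lt_of_mem hmem₂; omega)
    (Hnf.isBetaEtaNormal_of_mem_etaExpand hA₁ hmem₁) (hA₂ _ hmem₂) hj'
    (ar ∘ underSlots H₂.binders) (har.comp (underSlots_injective _)) fun _ => harB _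
  rw [permEnv_comp_underSlots] at hT hF
  refine ⟨freshArgs ar 0 (H₁.pivot ar) ++ selector (H₁.arity ar) j :: L, ?_, ?_, ?_⟩
  · simp only [List.forall_mem_append, List.forall_mem_cons]
    exact ⟨closed_freshArgs ar 0 _, closed_selector (by omega), hL⟩
  · rw [hc] at hT
    exact (H₁.apps_inst_toLam_selector (c := c) (by omega) (by omega)).trans hT
  · rw [ht, hk]
    refine (H₂.apps_inst_toLam_selector (c := 0) (by omega) (by omega)).trans ?_
    simpa using hF

end Cases

end Bohm

theorem permSeparable_of_ne {B : ℕ} {M N : Lam} (hM : IsBetaEtaNormal M) (hN : IsBetaEtaNormal N)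
    (hne : M ≠ N) (hB : size M + size N ≤ B) : PermSeparable B M N := by
  induction hs : size M + size N using Nat.strong_induction_on generalizing M N with
  | _ s ih =>
  subst hs
  intro ar har harB
  obtain ⟨H₁, rfl, hA₁⟩ := hM.exists_hnf
  obtain ⟨H₂, rfl, hA₂⟩ := hN.exists_hnf
  have ih' : ∀ M N, size M + size N < size H₁.toLam + size H₂.toLam → IsBetaEtaNormal M →
      IsBetaEtaNormal N → M ≠ N → PermSeparable B M N :=
    fun M N hlt hM hN hne => ih _ hlt hM hN hne (by omega) rfl
  rcases lt_trichotomy (H₁.pivot ar) (H₂.pivot ar) with ht | ht | ht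
  · exact separable_of_pivot_lt harB hB ht
  · rcases lt_trichotomy (H₁.arity ar) (H₂.arity ar) with hk | hk | hk
    · exact separable_of_arity_lt harB hB ht hk
    · rcases le_total H₁.binders H₂.binders with hpq | hpq
      · exact separable_of_arity_eq har harB hB hA₁ hN hA₂ hne hpq ht hk ih'
      · exact (separable_of_arity_eq har harB (by omega) hA₂ hM hA₁ hne.symm hpq ht.symm
          hk.symm fun M N hlt => ih' M N (by omega)).symm
    · exact (separable_of_arity_lt harB (by omega) ht.symm hk).symm
  · exact (separable_of_pivot_lt harB (by omega) ht).symm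

theorem separable_of_ne {M N : Lam} (hM : IsBetaEtaNormal M) (hN : IsBetaEtaNormal N)
    (hcM : Closed M) (hcN : Closed N) (hne : M ≠ N) : Separable M N := by
  have h := permSeparable_of_ne hM hN hne le_rfl
    (fun x => size M + size N + 1 + Equiv.natSumNatEquivNat x)
    ((add_right_injective _).comp Equiv.natSumNatEquivNat.injective) fun x => by omega
  rwa [inst_eq_self (closedEnv_permEnv _ 0) hcM, inst_eq_self (closedEnv_permEnv _ 0) hcN] at h

lemma closed_lam_apps_var_zero {M : Lam} (hM : Closed M) {L : List Lam}
    (hL : ∀ X ∈ L, Closed X) : Closed (lam (apps M (var 0 :: L))) := by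
  rintro n hn
  simp only [hasFree_lam, apps_cons, hasFree_apps, hasFree_app, hasFree_var] at hn
  rcases hn with (h | h) | ⟨X, hX, h⟩
  exacts [hM _ h, by omega, hL X hX _ h]

lemma lam_apps_var_zero_betaEq {M : Lam} (hM : Closed M) {L : List Lam} (hL : ∀ X ∈ L, Closed X)
    {X : Lam} (hX : Closed X) : app (lam (apps M (var 0 :: L))) X ≃β apps M (X :: L) := by
  have hI : ClosedEnv fun _ => I := fun _ => closed_I
  have h := betaEq_app_inst_lam hI hX (apps M (var 0 :: L))
  rwa [inst_eq_self hI (closed_lam_apps_var_zero hM hL), inst_apps, inst_eq_self (hI.push hX) hM,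
    List.map_cons, inst_var, List.map_congr_left fun Y hY => inst_eq_self (hI.push hX) (hL Y hY),
    List.map_id'] at h

end Lam

/-- A numeral system `d` possesses a closed λ-term for Zero Test iff the function
`φ` with `φ 0 = 0` and `φ n = 1` for `n ≥ 1` is λ-definable with respect to `d`. -/
theorem statement13 (d : ℕ → Lam)
    (hc : ∀ n, Lam.Closed (d n)) (hn : ∀ n, Lam.IsBetaEtaNormal (d n))
    (hinj : Function.Injective d) :
    (∃ Z, Lam.Closed Z ∧ Lam.BetaEq (Lam.app Z (d 0)) Lam.T ∧
        ∀ n, Lam.BetaEq (Lam.app Z (d (n + 1))) Lam.F) ↔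
    (∃ Fφ, Lam.Closed Fφ ∧
        ∀ n, Lam.BetaEq (Lam.app Fφ (d n)) (d (if n = 0 then 0 else 1))) := by
  open Lam in
  constructor
  · rintro ⟨Z, hZ, hZ0, hZs⟩
    have hL : ∀ X ∈ [d 0, d 1], Closed X := by simp [hc]
    refine ⟨lam (apps Z [var 0, d 0, d 1]), closed_lam_apps_var_zero hZ hL, fun n => ?_⟩
    refine (lam_apps_var_zero_betaEq hZ hL (hc n)).trans ?_
    rcases n with _ | n
    · exact ((hZ0.app_left _).app_left _).trans (app_app_T (hc 0) (hc 1))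
    · exact (((hZs n).app_left _).app_left _).trans (app_app_F (hc 0) (hc 1))
  · rintro ⟨Fφ, hF, hFφ⟩
    obtain ⟨L, hL, hT, hF'⟩ := separable_of_ne (hn 0) (hn 1) (hc 0) (hc 1) (hinj.ne zero_ne_one)
    refine ⟨lam (apps Fφ (var 0 :: L)), closed_lam_apps_var_zero hF hL, ?_, fun n => ?_⟩
    · exact (lam_apps_var_zero_betaEq hF hL (hc 0)).trans (((hFφ 0).apps_left L).trans hT)
    · exact (lam_apps_var_zero_betaEq hF hL (hc _)).trans (((hFφ (n + 1)).apps_left L).trans hF')
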